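/- arXiv:2501.11600 — 3 statements merged into one kernel-verified Lean document; each statement's English description precedes it below -/
import Mathlib

section
/- Let $(p_n)_{n\in\mathbb{Z}}$ be a sequence of exponents with $1 \le p_n$ and $\bar{p} := \sup_n p_n < \infty$. Then for every sequence $b = (b_n) \in \ell^{p_n}(\mathbb{Z})$ (the variable discrete Lebesgue space) and every $n \in \mathbb{Z}$, the series $\sum_{m \neq n} b_m/(n-m)$ converges absolutely; in fact $\sum_{m \neq n} |b_m|/|n-m| \le \frac{4 \cdot 2^{-2/\bar{p}}}{1 - 2^{-1/\bar{p}}} \|b\|_{\ell^{\bar{p}}(\mathbb{Z})}$. -/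
/-!
Since the modular of `b / λ` is at most `1`, every `|b m / λ| ≤ 1`, so raising to the larger
exponent `p̄` only decreases the terms and `b ∈ ℓ^{p̄}`. Hölder's inequality with the conjugate
exponent `q` of `p̄` bounds the sum by `‖b‖_{p̄} (∑_{k ≠ 0} |k|^{-q})^{1/q}`, and the integral
test gives `∑_{k ≠ 0} |k|^{-q} ≤ 2q/(q-1) = 2p̄`. Finally
`(2p̄)^{1/q} ≤ 2^{2/q} p̄ ≤ 2^{2/q}/(1 - 2^{-1/p̄})` because `1 - 2^{-1/p̄} ≤ log 2 / p̄`.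
For `p̄ = 1` the kernel is simply bounded by `1`.
-/

/-- Membership in the variable discrete Lebesgue space `ℓ^{p_n}(ℤ)`:
some positive `λ` makes the modular of `b/λ` summable and at most 1. -/
def MemVarLp (p : ℤ → ℝ) (b : ℤ → ℝ) : Prop :=
  ∃ lam : ℝ, 0 < lam ∧ Summable (fun n => |b n / lam| ^ p n) ∧
    ∑' n, |b n / lam| ^ p n ≤ 1

open Real Set MeasureTheory

lemma MemVarLp.summable_abs_rpow {p : ℤ → ℝ} {pbar : ℝ} (hp : ∀ n, 0 < p n)
    (hpbar : ∀ n, p n ≤ pbar) {b : ℤ → ℝ} (hb : MemVarLp p b) :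
    Summable fun m => |b m| ^ pbar := by
  obtain ⟨lam, hlam, hsum, hle⟩ := hb
  have hle_one : ∀ m, |b m / lam| ≤ 1 := fun m => by
    by_contra! h
    exact (one_lt_rpow h (hp m)).not_ge ((hsum.le_tsum m fun _ _ => by positivity).trans hle)
  have hsum' : Summable fun m => |b m / lam| ^ pbar :=
    .of_nonneg_of_le (fun _ => by positivity)
      (fun m => rpow_le_rpow_of_exponent_ge' (abs_nonneg _) (hle_one m) (hp m).le (hpbar m)) hsum
  refine (hsum'.mul_left (lam ^ pbar)).congr fun m => ?_
  rw [abs_div, abs_of_pos hlam, div_rpow (abs_nonneg _) hlam.le,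
    mul_div_cancel₀ _ (rpow_pos_of_pos hlam _).ne']

lemma tsum_nat_add_one_rpow_neg_le {q : ℝ} (hq : 1 < q) :
    ∑' k : ℕ, ((k : ℝ) + 1) ^ (-q) ≤ q / (q - 1) := by
  have hanti : AntitoneOn (fun x : ℝ => x ^ (-q)) (Ici 1) := fun x hx _ _ hxy =>
    rpow_le_rpow_of_nonpos (one_pos.trans_le hx) hxy (by linarith)
  have htail := AntitoneOn.tsum_comp_add_le_integral (f := fun x : ℝ => x ^ (-q)) 1
    (by simpa using hanti) (by simpa using integrableOn_Ioi_rpow_of_lt (by linarith) one_pos)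
    fun t ht => rpow_nonneg (by simp only [mem_Ioi, Nat.cast_one] at ht; linarith) _
  push_cast at htail
  rw [integral_Ioi_rpow_of_lt (by linarith) one_pos, one_rpow] at htail
  have hsum : Summable fun k : ℕ => ((k : ℝ) + 1) ^ (-q) := by
    simpa using (summable_nat_add_iff 1).2 (summable_nat_rpow.2 (by linarith : -q < -1))
  have hconst : 1 + -1 / (-q + 1) = q / (q - 1) := by
    field_simp [show q - 1 ≠ 0 by linarith, show -q + 1 ≠ 0 by linarith]
    ring
  rw [hsum.tsum_eq_zero_add, ← hconst]
  push_cast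
  simp only [zero_add, one_rpow]
  linarith

lemma tsum_int_abs_rpow_neg_le {q : ℝ} (hq : 1 < q) :
    ∑' k : ℤ, |(k : ℝ)| ^ (-q) ≤ 2 * (q / (q - 1)) := by
  rw [tsum_int_eq_zero_add_two_mul_tsum_pnat (fun k => by simp) (summable_abs_int_rpow hq),
    tsum_pnat_eq_tsum_succ (f := fun k : ℕ => |((k : ℤ) : ℝ)| ^ (-q))]
  push_cast
  simp only [abs_zero, zero_rpow (neg_ne_zero.2 (by linarith : q ≠ 0)), zero_add, nsmul_eq_mul,
    Nat.cast_ofNat]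
  have habs : ∀ k : ℕ, |(k : ℝ) + 1| = k + 1 := fun k => abs_of_nonneg (by positivity)
  simp only [habs]
  gcongr
  exact tsum_nat_add_one_rpow_neg_le hq

lemma summable_abs_intCast_sub_rpow_neg {q : ℝ} (hq : 1 < q) (n : ℤ) :
    Summable fun m : ℤ => |(n : ℝ) - m| ^ (-q) := by
  have := (Equiv.subLeft n).summable_iff.2 (summable_abs_int_rpow hq)
  simpa [Function.comp_def] using this

lemma tsum_abs_intCast_sub_rpow_neg_le {q : ℝ} (hq : 1 < q) (n : ℤ) :
    ∑' m : ℤ, |(n : ℝ) - m| ^ (-q) ≤ 2 * (q / (q - 1)) := by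
  have := (Equiv.subLeft n).tsum_eq (fun k : ℤ => |(k : ℝ)| ^ (-q))
  push_cast [Equiv.subLeft_apply] at this
  exact this ▸ tsum_int_abs_rpow_neg_le hq

lemma abs_intCast_sub_inv_le_one (n m : ℤ) : |(n : ℝ) - m|⁻¹ ≤ 1 := by
  rcases eq_or_ne n m with rfl | h
  · simp
  · exact inv_le_one_of_one_le₀ (by exact_mod_cast Int.one_le_abs (sub_ne_zero.2 h))

lemma summable_and_tsum_mul_abs_intCast_sub_inv_le {p : ℝ} (hp : 1 ≤ p) {b : ℤ → ℝ}
    (hb : Summable fun m => |b m| ^ p) (n : ℤ) :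
    Summable (fun m : ℤ => |b m| * |(n : ℝ) - m|⁻¹) ∧
      ∑' m : ℤ, |b m| * |(n : ℝ) - m|⁻¹ ≤ (2 * p) ^ (1 - p⁻¹) * (∑' m, |b m| ^ p) ^ (1 / p) := by
  rcases hp.eq_or_lt with rfl | hp
  · have hle : ∀ m, |b m| * |(n : ℝ) - m|⁻¹ ≤ |b m| := fun m =>
      mul_le_of_le_one_right (abs_nonneg _) (abs_intCast_sub_inv_le_one n m)
    simp only [rpow_one] at hb
    have hsum : Summable fun m : ℤ => |b m| * |(n : ℝ) - m|⁻¹ :=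
      .of_nonneg_of_le (fun _ => by positivity) hle hb
    refine ⟨hsum, ?_⟩
    simpa using hsum.tsum_le_tsum hle hb
  · set q := p.conjExponent
    have hpq : p.HolderConjugate q := .conjExponent hp
    have hq : 1 < q := hpq.symm.lt
    have hpow : ∀ m : ℤ, |(n : ℝ) - m|⁻¹ ^ q = |(n : ℝ) - m| ^ (-q) := fun m => by
      rw [inv_rpow (abs_nonneg _), rpow_neg (abs_nonneg _)]
    obtain ⟨hsum, hle⟩ := summable_and_inner_le_Lp_mul_Lq_tsum_of_nonneg hpq
      (fun m => abs_nonneg (b m)) (fun m => inv_nonneg.2 (abs_nonneg ((n : ℝ) - m))) hb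
      (by simpa only [hpow] using summable_abs_intCast_sub_rpow_neg hq n)
    refine ⟨hsum, hle.trans ?_⟩
    have hweight : ∑' m : ℤ, |(n : ℝ) - m|⁻¹ ^ q ≤ 2 * p := by
      simpa only [hpow, ← hpq.symm.conjExponent_eq, conjExponent] using
        tsum_abs_intCast_sub_rpow_neg_le hq n
    rw [mul_comm, hpq.one_sub_inv, ← one_div]
    gcongr

lemma one_sub_two_rpow_neg_one_div_le {p : ℝ} (hp : 0 < p) : 1 - 2 ^ (-1 / p) ≤ 1 / p := by
  have hexp : 1 - log 2 / p ≤ 2 ^ (-1 / p) := by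
    rw [rpow_def_of_pos two_pos]
    linarith [add_one_le_exp (log 2 * (-1 / p)), show log 2 * (-1 / p) = -(log 2 / p) by ring]
  have hlog : log 2 / p ≤ 1 / p := by
    gcongr
    linarith [log_le_sub_one_of_pos two_pos]
  linarith

lemma two_mul_rpow_one_sub_inv_le {p : ℝ} (hp : 1 ≤ p) :
    (2 * p) ^ (1 - p⁻¹) ≤ 4 * 2 ^ (-2 / p) / (1 - 2 ^ (-1 / p)) := by
  have hp0 : 0 < p := one_pos.trans_le hp
  set a := 1 - p⁻¹ with ha
  have ha0 : 0 ≤ a := sub_nonneg.2 (inv_le_one_of_one_le₀ hp)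
  have ha1 : a ≤ 1 := by simp [ha, hp0.le]
  have hden : 0 < 1 - (2 : ℝ) ^ (-1 / p) :=
    sub_pos.2 (rpow_lt_one_of_one_lt_of_neg one_lt_two (div_neg_of_neg_of_pos (by norm_num) hp0))
  have hp_le : p ≤ 1 / (1 - 2 ^ (-1 / p)) := by
    rw [le_div_iff₀ hden, mul_comm, ← le_div_iff₀ hp0]
    exact one_sub_two_rpow_neg_one_div_le hp0
  have hfour : 4 * (2 : ℝ) ^ (-2 / p) = 2 ^ (2 * a) := by
    rw [show 2 * a = 2 + -2 / p by rw [ha]; field_simp; ring, rpow_add two_pos]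
    norm_num
  calc (2 * p) ^ a = 2 ^ a * p ^ a := mul_rpow zero_le_two hp0.le
    _ ≤ 2 ^ (2 * a) * p := by
      gcongr
      · exact one_le_two
      · linarith
      · simpa using rpow_le_rpow_of_exponent_le hp ha1
    _ ≤ 2 ^ (2 * a) * (1 / (1 - 2 ^ (-1 / p))) := by gcongr
    _ = 4 * 2 ^ (-2 / p) / (1 - 2 ^ (-1 / p)) := by rw [hfour, mul_one_div]

theorem discrete_hilbert_well_defined
    (p : ℤ → ℝ) (pbar : ℝ) (hp1 : ∀ n, 1 ≤ p n) (hpbar : ∀ n, p n ≤ pbar)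
    (b : ℤ → ℝ) (hb : MemVarLp p b) (n : ℤ) :
    Summable (fun m : ℤ => if m = n then 0 else |b m| / |(n : ℝ) - m|) ∧
    (∑' m : ℤ, if m = n then 0 else |b m| / |(n : ℝ) - m|) ≤
      4 * 2 ^ (-(2 : ℝ) / pbar) / (1 - 2 ^ (-(1 : ℝ) / pbar)) *
        (∑' m : ℤ, |b m| ^ pbar) ^ (1 / pbar) := by
  have hpbar1 : 1 ≤ pbar := (hp1 0).trans (hpbar 0)
  -- at `m = n` the quotient is already `0`, because `x / 0 = 0`
  have hkernel : (fun m : ℤ => if m = n then 0 else |b m| / |(n : ℝ) - m|) =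
      fun m => |b m| * |(n : ℝ) - m|⁻¹ := by
    funext m
    split_ifs with h <;> simp [h, div_eq_mul_inv]
  obtain ⟨hsum, hle⟩ := summable_and_tsum_mul_abs_intCast_sub_inv_le hpbar1
    (hb.summable_abs_rpow (fun m => one_pos.trans_le (hp1 m)) hpbar) n
  rw [hkernel]
  refine ⟨hsum, hle.trans ?_⟩
  gcongr
  exact two_mul_rpow_one_sub_inv_le hpbar1
end

section
/- Let $(p_m)_{m\in\mathbb{Z}}$ satisfy $1 \le p_m \le \bar{p} < \infty$ and let $(b_m)$ satisfy $\sum_m |b_m|^{p_m} \le 1$ (so in particular $|b_m| \le 1$ for all $m$). Then for every $n \in \mathbb{Z}$, $\left( \sum_{m \neq n} \frac{|b_m|}{|n-m|^2} \right)^{p_n} \le C \sum_{m \neq n} \frac{|b_m|^{p_m}}{|n-m|^2}$ raised to the power $\underline{p}/\bar{p}$, where $\underline{p} = \inf_m p_m \ge 1$ and $C$ depends only on $\bar{p}$. Concretely: $\left( \sum_{m \neq n} \frac{|b_m|}{|n-m|^2} \right)^{p_n} \le 4^{\bar{p}} \left( \sum_{m \neq n} \frac{|b_m|^{p_m}}{|n-m|^2}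 \right)^{\underline{p}/\bar{p}}$. -/
/-!
Weighted Hölder with the weights `w m = 1 / (n - m) ^ 2`, whose total mass is
`π ^ 2 / 3 ≤ 4`, bounds `∑ w m |b m|` by `4 * (∑ w m |b m| ^ p̄) ^ (1 / p̄)`. Since `|b m| ≤ 1`
and `p m ≤ p̄`, we may replace `|b m|` by the larger `|b m| ^ (p m / p̄)`, which turns the fixed
exponent `p̄` into the variable one `p m`. Raising to the power `p n ≤ p̄` and using that the
right-hand sum is at most `1` lowers the exponent `p n / p̄` to `pmin / p̄`.
-/

open Real

theorem hasSum_int_one_div_sq : HasSum (fun k : ℤ => 1 / (k : ℝ) ^ 2) (π ^ 2 / 3) := by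
  have h := hasSum_zeta_two.of_nat_of_neg (f := fun k : ℤ => 1 / (k : ℝ) ^ 2)
    (by simpa using hasSum_zeta_two)
  rwa [Int.cast_zero, zero_pow two_ne_zero, div_zero, sub_zero,
    show π ^ 2 / 6 + π ^ 2 / 6 = π ^ 2 / 3 by ring] at h

theorem hasSum_one_div_int_sub_sq (n : ℤ) :
    HasSum (fun m : ℤ => 1 / ((n - m : ℤ) : ℝ) ^ 2) (π ^ 2 / 3) :=
  (Equiv.subLeft n).hasSum_iff.mp <| by
    simpa [Function.comp_def] using hasSum_int_one_div_sq

theorem tsum_one_div_int_sub_sq_le_four (n : ℤ) :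
    ∑' m : ℤ, 1 / ((n - m : ℤ) : ℝ) ^ 2 ≤ 4 := by
  rw [(hasSum_one_div_int_sub_sq n).tsum_eq]
  nlinarith [pi_lt_d2, pi_pos]

theorem one_div_int_sq_le_one (k : ℤ) : 1 / (k : ℝ) ^ 2 ≤ 1 := by
  rcases eq_or_ne k 0 with rfl | hk
  · simp
  · refine div_le_one_of_le₀ ?_ (sq_nonneg _)
    exact_mod_cast one_le_sq_iff_one_le_abs _ |>.mpr (Int.one_le_abs hk)

theorem le_one_of_tsum_rpow_le_one {ι : Type*} {f p : ι → ℝ} (hf : ∀ i, 0 ≤ f i)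
    (hp : ∀ i, 0 < p i) (hs : Summable fun i => f i ^ p i) (h1 : ∑' i, f i ^ p i ≤ 1) (i : ι) :
    f i ≤ 1 := by
  have hi : f i ^ p i ≤ 1 ^ p i :=
    (one_rpow (p i)).symm ▸ (hs.le_tsum i fun j _ => rpow_nonneg (hf j) _).trans h1
  exact (rpow_le_rpow_iff (hf i) zero_le_one (hp i)).mp hi

namespace Real

variable {ι : Type*} {w f : ι → ℝ} {r : ℝ}

theorem summable_and_inner_le_weight_mul_Lp_tsum_of_nonneg (hr : 1 ≤ r) (hw : ∀ i, 0 ≤ w i)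
    (hf : ∀ i, 0 ≤ f i) (hws : Summable w) (hwf : Summable fun i => w i * f i ^ r) :
    Summable (fun i => w i * f i) ∧
      ∑' i, w i * f i ≤ (∑' i, w i) ^ (1 - r⁻¹) * (∑' i, w i * f i ^ r) ^ r⁻¹ := by
  have hbound (s : Finset ι) :
      ∑ i ∈ s, w i * f i ≤ (∑' i, w i) ^ (1 - r⁻¹) * (∑' i, w i * f i ^ r) ^ r⁻¹ := by
    refine (inner_le_weight_mul_Lp_of_nonneg s hr w f hw hf).trans ?_
    have hwf0 (i : ι) : 0 ≤ w i * f i ^ r := mul_nonneg (hw i) (rpow_nonneg (hf i) r)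
    have hexp : 0 ≤ 1 - r⁻¹ := sub_nonneg.mpr (inv_le_one_of_one_le₀ hr)
    exact mul_le_mul
      (rpow_le_rpow (Finset.sum_nonneg fun i _ => hw i) (hws.sum_le_tsum s fun i _ => hw i) hexp)
      (rpow_le_rpow (Finset.sum_nonneg fun i _ => hwf0 i) (hwf.sum_le_tsum s fun i _ => hwf0 i)
        (by positivity))
      (rpow_nonneg (Finset.sum_nonneg fun i _ => hwf0 i) _) (rpow_nonneg (tsum_nonneg hw) _)
  have hs := summable_of_sum_le (fun i => mul_nonneg (hw i) (hf i)) hbound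
  exact ⟨hs, hs.tsum_le_of_sum_le hbound⟩

theorem summable_and_inner_le_weight_mul_tsum_rpow_of_le_one {p : ι → ℝ} (hr : 1 ≤ r)
    (hp : ∀ i, p i ≤ r) (hw : ∀ i, 0 ≤ w i) (hf0 : ∀ i, 0 ≤ f i) (hf1 : ∀ i, f i ≤ 1)
    (hws : Summable w) (hwf : Summable fun i => w i * f i ^ p i) :
    Summable (fun i => w i * f i) ∧
      ∑' i, w i * f i ≤ (∑' i, w i) ^ (1 - r⁻¹) * (∑' i, w i * f i ^ p i) ^ r⁻¹ := by
  have hpow (i : ι) : (f i ^ (p i / r)) ^ r = f i ^ p i := by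
    rw [← rpow_mul (hf0 i), div_mul_cancel₀ _ (by positivity)]
  have hle (i : ι) : w i * f i ≤ w i * f i ^ (p i / r) :=
    mul_le_mul_of_nonneg_left
      (self_le_rpow_of_le_one (hf0 i) (hf1 i) ((div_le_one (by positivity)).mpr (hp i))) (hw i)
  obtain ⟨hs, hholder⟩ := summable_and_inner_le_weight_mul_Lp_tsum_of_nonneg hr hw
    (fun i => rpow_nonneg (hf0 i) (p i / r)) hws (by simpa only [hpow] using hwf)
  have hs' : Summable fun i => w i * f i :=
    hs.of_nonneg_of_le (fun i => mul_nonneg (hw i) (hf0 i)) hle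
  refine ⟨hs', (hs'.tsum_le_tsum hle hs).trans ?_⟩
  simpa only [hpow] using hholder

end Real

theorem rpow_le_of_le_mul_rpow_inv {S T C q r pbar : ℝ} (hS : 0 ≤ S) (hT0 : 0 ≤ T)
    (hT1 : T ≤ 1) (hC : 1 ≤ C) (hSle : S ≤ C * T ^ pbar⁻¹) (hq : 0 < q) (hqp : q ≤ pbar)
    (hrq : r ≤ q) : S ^ q ≤ C ^ pbar * T ^ (r / pbar) := by
  have hpbar : 0 < pbar := hq.trans_le hqp
  rcases hT0.eq_or_lt with rfl | hTpos
  · have hS0 : S = 0 := le_antisymm (by simpa [zero_rpow, hpbar.ne'] using hSle) hS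
    rw [hS0, zero_rpow hq.ne']
    positivity
  calc S ^ q ≤ (C * T ^ pbar⁻¹) ^ q := rpow_le_rpow hS hSle hq.le
    _ = C ^ q * T ^ (q / pbar) := by
      rw [mul_rpow (by positivity) (by positivity), ← rpow_mul hT0, inv_mul_eq_div]
    _ ≤ C ^ pbar * T ^ (r / pbar) := by
      refine mul_le_mul (rpow_le_rpow_of_exponent_le hC hqp) ?_ (by positivity) (by positivity)
      exact rpow_le_rpow_of_exponent_ge hTpos hT1 (div_le_div_of_nonneg_right hrq hpbar.le)

theorem holder_step_estimate_general
    (p : ℤ → ℝ) (pmin pbar : ℝ)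
    (hp1 : ∀ m, 1 ≤ p m) (hpbar : ∀ m, p m ≤ pbar) (hpmin : ∀ m, pmin ≤ p m)
    (b : ℤ → ℝ) (hbsum : Summable fun m => |b m| ^ p m)
    (hbmod : ∑' m, |b m| ^ p m ≤ 1)
    (n : ℤ) :
    (∑' m : ℤ, if m = n then 0 else |b m| / |(n : ℝ) - m| ^ 2) ^ p n ≤
      4 ^ pbar *
        (∑' m : ℤ, if m = n then 0 else |b m| ^ p m / |(n : ℝ) - m| ^ 2) ^
          (pmin / pbar) := by
  set w : ℤ → ℝ := fun m => 1 / ((n - m : ℤ) : ℝ) ^ 2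
  -- Since `1 / 0 = 0`, the weight `w` vanishes at `m = n`, which absorbs the case split.
  have hterm (x : ℝ) (m : ℤ) : (if m = n then 0 else x / |(n : ℝ) - m| ^ 2) = w m * x := by
    split_ifs with h <;> simp [w, h, sq_abs, div_eq_inv_mul]
  simp only [hterm]
  have hw0 (m : ℤ) : 0 ≤ w m := by positivity
  have hb1 := le_one_of_tsum_rpow_le_one (fun m => abs_nonneg (b m))
    (fun m => one_pos.trans_le (hp1 m)) hbsum hbmod
  have hB (m : ℤ) : w m * |b m| ^ p m ≤ |b m| ^ p m :=
    mul_le_of_le_one_left (by positivity) (one_div_int_sq_le_one _)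
  have hBs : Summable fun m => w m * |b m| ^ p m :=
    hbsum.of_nonneg_of_le (fun m => by positivity) hB
  have hpbar1 : 1 ≤ pbar := (hp1 0).trans (hpbar 0)
  obtain ⟨-, hholder⟩ := summable_and_inner_le_weight_mul_tsum_rpow_of_le_one hpbar1 hpbar hw0
    (fun m => abs_nonneg (b m)) hb1 (hasSum_one_div_int_sub_sq n).summable hBs
  refine rpow_le_of_le_mul_rpow_inv (tsum_nonneg fun m => by positivity)
    (tsum_nonneg fun m => by positivity) ((hBs.tsum_le_tsum hB hbsum).trans hbmod)
    (by norm_num) (hholder.trans ?_) (one_pos.trans_le (hp1 n)) (hpbar n) (hpmin n)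
  have hexp : 0 ≤ 1 - pbar⁻¹ := sub_nonneg.mpr (inv_le_one_of_one_le₀ hpbar1)
  gcongr
  calc (∑' m, w m) ^ (1 - pbar⁻¹) ≤ 4 ^ (1 - pbar⁻¹) := by
        gcongr
        exact tsum_one_div_int_sub_sq_le_four n
    _ ≤ 4 := rpow_le_self_of_one_le (by norm_num) (sub_le_self 1 (by positivity))

theorem holder_step_estimate
    (p : ℤ → ℝ) (pmin pbar : ℝ)
    (hp1 : ∀ m, 1 ≤ p m) (hpbar : ∀ m, p m ≤ pbar) (hpmin : ∀ m, pmin ≤ p m)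
    (hpmin1 : 1 ≤ pmin)
    (b : ℤ → ℝ) (hbsum : Summable fun m => |b m| ^ p m)
    (hbmod : ∑' m, |b m| ^ p m ≤ 1)
    (n : ℤ) :
    (∑' m : ℤ, if m = n then 0 else |b m| / |(n : ℝ) - m| ^ 2) ^ p n ≤
      4 ^ pbar *
        (∑' m : ℤ, if m = n then 0 else |b m| ^ p m / |(n : ℝ) - m| ^ 2) ^
          (pmin / pbar) :=
  holder_step_estimate_general p pmin pbar hp1 hpbar hpmin b hbsum hbmod n
end

section
/- Let $(p_m)$ satisfy $1 \le p_m \le \bar{p} < \infty$ and let $(b_m)$ satisfy $\sum_m |b_m|^{p_m} \le 1$. Then there is a constant $C = C(\bar{p})$, independent of $k_0$ and $n_0$, such that for all $k_0 \in \mathbb{Z}$ and $n_0 \in \mathbb{N}$, $\sum_{|n - k_0| \le n_0 + 1} \sum_{m \neq n} \frac{|b_m|^{p_m}}{|n - m|^2} \le C$. -/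
/-! Write the summand as `a m * K (m - n)` with `a m = |b m| ^ p m` and `K k = 1 / k ^ 2`; the excluded
term `m = n` matches `K 0 = 0`, which holds because `1 / 0 = 0`. Swapping the finite sum over `n` with the
sum over `m`, for each fixed `m` the translates `K (m - n)` sum to at most `∑' k, K k = π² / 3`, so the
double sum is at most `(∑' m, a m) * ∑' k, K k ≤ ∑' k, K k`. -/

open Finset

section Convolution

variable {G : Type*} [AddGroup G] {K : G → ℝ}

theorem Summable.sum_comp_subLeft_le_tsum (hK : ∀ k, 0 ≤ K k) (hKs : Summable K) (m : G)
    (s : Finset G) : ∑ n ∈ s, K (m - n) ≤ ∑' k, K k := by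
  have hsub : Summable fun n => K (Equiv.subLeft m n) := (Equiv.subLeft m).summable_iff.mpr hKs
  calc ∑ n ∈ s, K (m - n) ≤ ∑' n, K (Equiv.subLeft m n) :=
        hsub.sum_le_tsum s (fun n _ => hK _)
    _ = ∑' k, K k := (Equiv.subLeft m).tsum_eq K

theorem sum_tsum_mul_sub_le {a : G → ℝ} (ha : ∀ m, 0 ≤ a m) (has : Summable a)
    (hK : ∀ k, 0 ≤ K k) (hKs : Summable K) (s : Finset G) :
    ∑ n ∈ s, ∑' m, a m * K (m - n) ≤ (∑' m, a m) * ∑' k, K k := by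
  have hK_le : ∀ k, K k ≤ ∑' k, K k := fun k => hKs.le_tsum k fun j _ => hK j
  have hrow : ∀ n, Summable fun m => a m * K (m - n) := fun n =>
    (has.mul_right _).of_nonneg_of_le (fun m => mul_nonneg (ha m) (hK _))
      fun m => mul_le_mul_of_nonneg_left (hK_le _) (ha m)
  have hcol : ∀ m, ∑ n ∈ s, a m * K (m - n) ≤ a m * ∑' k, K k := fun m => by
    rw [← mul_sum]
    exact mul_le_mul_of_nonneg_left (hKs.sum_comp_subLeft_le_tsum hK m s) (ha m)
  calc ∑ n ∈ s, ∑' m, a m * K (m - n) = ∑' m, ∑ n ∈ s, a m * K (m - n) :=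
        (Summable.tsum_finsetSum fun n _ => hrow n).symm
    _ ≤ ∑' m, a m * ∑' k, K k :=
        Summable.tsum_le_tsum hcol
          ((has.mul_right _).of_nonneg_of_le
            (fun m => sum_nonneg fun n _ => mul_nonneg (ha m) (hK _)) hcol)
          (has.mul_right _)
    _ = (∑' m, a m) * ∑' k, K k := tsum_mul_right

end Convolution

theorem ite_div_abs_sub_sq_eq_mul (x : ℝ) (n m : ℤ) :
    (if m = n then 0 else x / |(n : ℝ) - m| ^ 2) = x * (1 / ((m - n : ℤ) : ℝ) ^ 2) := by
  split_ifs with hmn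
  · simp [hmn]
  · rw [mul_one_div, sq_abs, Int.cast_sub, ← neg_sub, neg_sq]

theorem uniform_double_sum_bound_general
    (p : ℤ → ℝ)
    (b : ℤ → ℝ) (hbsum : Summable fun m => |b m| ^ p m)
    (hbmod : ∑' m, |b m| ^ p m ≤ 1) :
    ∃ C : ℝ, 0 < C ∧ ∀ (k₀ : ℤ) (n₀ : ℕ),
      ∑ n ∈ Finset.Icc (k₀ - (n₀ + 1)) (k₀ + (n₀ + 1)),
        (∑' m : ℤ, if m = n then 0 else |b m| ^ p m / |(n : ℝ) - m| ^ 2) ≤ C := by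
  set T := ∑' k : ℤ, 1 / (k : ℝ) ^ 2
  have hK : ∀ k : ℤ, 0 ≤ 1 / (k : ℝ) ^ 2 := fun k => by positivity
  have hT : 0 ≤ T := tsum_nonneg hK
  refine ⟨T + 1, by positivity, fun k₀ n₀ => ?_⟩
  simp_rw [ite_div_abs_sub_sq_eq_mul]
  calc _ ≤ (∑' m, |b m| ^ p m) * T :=
        sum_tsum_mul_sub_le (fun m => by positivity) hbsum hK
          (Real.summable_one_div_int_pow.mpr one_lt_two) _
    _ ≤ 1 * T := mul_le_mul_of_nonneg_right hbmod hT
    _ ≤ T + 1 := by linarith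

theorem uniform_double_sum_bound
    (p : ℤ → ℝ) (pbar : ℝ)
    (hp1 : ∀ m, 1 ≤ p m) (hpbar : ∀ m, p m ≤ pbar)
    (b : ℤ → ℝ) (hbsum : Summable fun m => |b m| ^ p m)
    (hbmod : ∑' m, |b m| ^ p m ≤ 1) :
    ∃ C : ℝ, 0 < C ∧ ∀ (k₀ : ℤ) (n₀ : ℕ),
      ∑ n ∈ Finset.Icc (k₀ - (n₀ + 1)) (k₀ + (n₀ + 1)),
        (∑' m : ℤ, if m = n then 0 else |b m| ^ p m / |(n : ℝ) - m| ^ 2) ≤ C :=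
  uniform_double_sum_bound_general p b hbsum hbmod
end
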